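/- Let p be a prime, let H be a positive integer, let 𝓜 ⊆ 𝔽_p^* be a set of cardinality M, and let L be any integer. Let J(L, 𝓗, 𝓜) denote the number of quadruples (h_1, h_2, m_1, m_2) with h_1, h_2 ∈ {1, …, H} and m_1, m_2 ∈ 𝓜 satisfying (L + h_1)·m_1 ≡ (L + h_2)·m_2 (mod p), and let J(𝓗, 𝓜) = J(0, 𝓗, 𝓜). Then J(L, 𝓗, 𝓜) ≤ 2·J(𝓗, 𝓜) + M^2. -/

import Mathlib

/-!
Write `N_c(m₁, m₂)` for the number of `(h₁, h₂) ∈ 𝓗²` with `h₁ m₁ - h₂ m₂ = c`, so that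
`J(L, 𝓗, 𝓜) = ∑ N_{L (m₂ - m₁)}(m₁, m₂)` over `(m₁, m₂) ∈ 𝓜²`. The key bound is
`N_c(m₁, m₂) ≤ N_0(m₁, m₂) + N_0(m₁, -m₂) + 1`. If `H ≤ p`, either coordinate of a solution
determines the other, so subtracting the solution with the least first coordinate sends the other
solutions injectively to solutions of `h₁ m₁ = ± h₂ m₂`. If `H ≥ p`, each residue class meets `𝓗`
between `⌊H/p⌋` and `⌊H/p⌋ + 1 ≤ 2 ⌊H/p⌋` times, so all the `N_c(m₁, m₂)` are comparable.
Summed over `𝓜²`, the terms `N_0(m₁, -m₂)` count pairs `x, y ∈ 𝓗 × 𝓜` with `x₁ x₂ = -y₁ y₂`;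
by Cauchy–Schwarz there are at most as many as pairs with `x₁ x₂ = y₁ y₂`, which is `J(𝓗, 𝓜)`.
-/

open Finset

section Counting

variable {α β γ : Type*}

theorem card_filter_product_eq_sum (s : Finset α) (t : Finset β) (P : α × β → Prop)
    [DecidablePred P] :
    #{x ∈ s ×ˢ t | P x} = ∑ b ∈ t, #{a ∈ s | P (a, b)} := by
  simp only [card_filter, sum_product]
  exact sum_comm

theorem sum_card_filter_product_product (s : Finset α) (t : Finset β)
    (P : α → β → α → β → Prop) [∀ a b c d, Decidable (P a b c d)] :
    ∑ y ∈ t ×ˢ t, #{x ∈ s ×ˢ s | P x.1 y.1 x.2 y.2} =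
      #{z ∈ (s ×ˢ t) ×ˢ (s ×ˢ t) | P z.1.1 z.1.2 z.2.1 z.2.2} := by
  rw [← card_filter_product_eq_sum (s ×ˢ s) (t ×ˢ t) fun q => P q.1.1 q.2.1 q.1.2 q.2.2]
  refine card_nbij' (fun q => ((q.1.1, q.2.1), (q.1.2, q.2.2)))
    (fun z => ((z.1.1, z.2.1), (z.1.2, z.2.2))) ?_ ?_ (fun _ _ => rfl) (fun _ _ => rfl) <;>
  · intro q
    simp only [coe_filter, Set.mem_ofPred_eq, mem_product]
    tauto

theorem card_filter_eq_eq_sum_mul [Fintype γ] [DecidableEq γ] (s : Finset α) (t : Finset β)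
    (f : α → γ) (g : β → γ) :
    #{x ∈ s ×ˢ t | f x.1 = g x.2} = ∑ c, #{a ∈ s | f a = c} * #{b ∈ t | g b = c} := by
  rw [card_eq_sum_card_fiberwise (f := fun x => f x.1) (t := univ) (by simp)]
  refine sum_congr rfl fun c _ => ?_
  rw [← card_product, filter_filter, ← filter_product]
  congr 1
  refine filter_congr fun x _ => ?_
  constructor
  · rintro ⟨h, rfl⟩; exact ⟨rfl, h.symm⟩
  · rintro ⟨rfl, h⟩; exact ⟨h.symm, rfl⟩

theorem two_mul_card_filter_eq_le [Fintype γ] [DecidableEq γ] (s : Finset α) (t : Finset β)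
    (f : α → γ) (g : β → γ) :
    2 * #{x ∈ s ×ˢ t | f x.1 = g x.2} ≤
      #{x ∈ s ×ˢ s | f x.1 = f x.2} + #{x ∈ t ×ˢ t | g x.1 = g x.2} := by
  simp only [card_filter_eq_eq_sum_mul, mul_sum, ← sum_add_distrib]
  gcongr with c
  nlinarith [sq_nonneg ((#{a ∈ s | f a = c} : ℤ) - #{b ∈ t | g b = c})]

end Counting

theorem card_filter_Icc_intCast_eq_bounds {n : ℕ} [NeZero n] (H : ℕ) (a : ZMod n) :
    H / n ≤ #{h ∈ Icc (1 : ℤ) H | ((h : ℤ) : ZMod n) = a} ∧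
      #{h ∈ Icc (1 : ℤ) H | ((h : ℤ) : ZMod n) = a} ≤ H / n + 1 := by
  obtain ⟨v, rfl⟩ : ∃ v : ℤ, (v : ZMod n) = a := ⟨a.cast, ZMod.intCast_zmod_cast a⟩
  have hcount := Int.Ioc_filter_modEq_card 0 (H : ℤ) (r := n)
    (by exact_mod_cast Nat.pos_of_neZero n) v
  simp_rw [← Icc_add_one_left_eq_Ioc, zero_add, ← ZMod.intCast_eq_intCast_iff,
    Int.cast_natCast, Int.cast_zero, zero_sub, sub_div, sub_eq_neg_add, neg_div] at hcount
  have hfloor : ⌊(H / n : ℚ)⌋ = ((H / n : ℕ) : ℤ) := Rat.floor_natCast_div_natCast H n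
  constructor
  · have := Int.le_floor_add (-(v / n : ℚ)) (H / n)
    omega
  · have := Int.le_floor_add_floor (-(v / n : ℚ)) (H / n)
    have : (0 : ℤ) ≤ (H : ℤ) / n := by positivity
    omega

theorem ZMod.intCast_injOn_Icc {n H : ℕ} (hH : H ≤ n) :
    Set.InjOn (Int.cast : ℤ → ZMod n) (Set.Icc (1 : ℤ) H) := by
  rintro x ⟨hx₁, hx₂⟩ y ⟨hy₁, hy₂⟩ hxy
  have := CharP.intCast_injOn_Ico (ZMod n) n
    (show x - 1 ∈ Set.Ico 0 (n : ℤ) by constructor <;> omega)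
    (show y - 1 ∈ Set.Ico 0 (n : ℤ) by constructor <;> omega) (by push_cast; rw [hxy])
  omega

noncomputable def pairSolutions (p H : ℕ) (m₁ m₂ c : ZMod p) : Finset (ℤ × ℤ) :=
  {h ∈ Icc (1 : ℤ) H ×ˢ Icc (1 : ℤ) H | (h.1 : ZMod p) * m₁ - h.2 * m₂ = c}

namespace pairSolutions

variable {p H : ℕ} {m₁ m₂ c : ZMod p} {a b : ℤ × ℤ}

theorem mem_iff :
    a ∈ pairSolutions p H m₁ m₂ c ↔
      (1 ≤ a.1 ∧ a.1 ≤ H) ∧ (1 ≤ a.2 ∧ a.2 ≤ H) ∧ (a.1 : ZMod p) * m₁ - a.2 * m₂ = c := by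
  simp [pairSolutions, and_assoc]

theorem intCast_sub_mul_eq (ha : a ∈ pairSolutions p H m₁ m₂ c)
    (hb : b ∈ pairSolutions p H m₁ m₂ c) :
    ((a.1 - b.1 : ℤ) : ZMod p) * m₁ = ((a.2 - b.2 : ℤ) : ZMod p) * m₂ := by
  have ea := (mem_iff.1 ha).2.2
  have eb := (mem_iff.1 hb).2.2
  push_cast
  linear_combination ea - eb

theorem sub_abs_sub_mem_union (ha : a ∈ pairSolutions p H m₁ m₂ c)
    (hb : b ∈ pairSolutions p H m₁ m₂ c) (h₁ : b.1 < a.1) (h₂ : a.2 ≠ b.2) :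
    (a.1 - b.1, |a.2 - b.2|) ∈ pairSolutions p H m₁ m₂ 0 ∪ pairSolutions p H m₁ (-m₂) 0 := by
  obtain ⟨⟨ha₁, ha₁'⟩, ⟨ha₂, ha₂'⟩, -⟩ := mem_iff.1 ha
  obtain ⟨⟨hb₁, hb₁'⟩, ⟨hb₂, hb₂'⟩, -⟩ := mem_iff.1 hb
  have hdiff := intCast_sub_mul_eq ha hb
  rw [mem_union, mem_iff, mem_iff]
  rcases abs_cases (a.2 - b.2) with ⟨habs, hsign⟩ | ⟨habs, hsign⟩ <;> rw [habs]
  · refine .inl ⟨⟨by omega, by omega⟩, ⟨by omega, by omega⟩, ?_⟩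
    linear_combination hdiff
  · refine .inr ⟨⟨by omega, by omega⟩, ⟨by omega, by omega⟩, ?_⟩
    push_cast at hdiff ⊢
    linear_combination hdiff

variable [Fact p.Prime]

theorem injOn_fst (hHp : H ≤ p) (hm₂ : m₂ ≠ 0) :
    Set.InjOn Prod.fst (pairSolutions p H m₁ m₂ c : Set (ℤ × ℤ)) := by
  intro a ha b hb h
  have := intCast_sub_mul_eq ha hb
  rw [h, sub_self, Int.cast_zero, zero_mul, eq_comm, mul_eq_zero, or_iff_left hm₂, Int.cast_sub,
    sub_eq_zero] at this
  exact Prod.ext h (ZMod.intCast_injOn_Icc hHp (mem_iff.1 ha).2.1 (mem_iff.1 hb).2.1 this)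

theorem injOn_snd (hHp : H ≤ p) (hm₁ : m₁ ≠ 0) :
    Set.InjOn Prod.snd (pairSolutions p H m₁ m₂ c : Set (ℤ × ℤ)) := by
  intro a ha b hb h
  have := intCast_sub_mul_eq ha hb
  rw [h, sub_self, Int.cast_zero, zero_mul, mul_eq_zero, or_iff_left hm₁, Int.cast_sub,
    sub_eq_zero] at this
  exact Prod.ext (ZMod.intCast_injOn_Icc hHp (mem_iff.1 ha).1 (mem_iff.1 hb).1 this) h

theorem card_le_card_zero_add_card_zero_of_le (hHp : H ≤ p) (hm₁ : m₁ ≠ 0) (hm₂ : m₂ ≠ 0)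
    (c : ZMod p) :
    #(pairSolutions p H m₁ m₂ c) ≤
      #(pairSolutions p H m₁ m₂ 0) + #(pairSolutions p H m₁ (-m₂) 0) + 1 := by
  set S := pairSolutions p H m₁ m₂ c
  obtain hS | hS := S.eq_empty_or_nonempty
  · simp [hS]
  obtain ⟨b, hb, hmin⟩ := S.exists_min_image Prod.fst hS
  have hmaps : Set.MapsTo (fun a : ℤ × ℤ => (a.1 - b.1, |a.2 - b.2|)) (S.erase b)
      (pairSolutions p H m₁ m₂ 0 ∪ pairSolutions p H m₁ (-m₂) 0 : Finset (ℤ × ℤ)) := by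
    intro a ha
    obtain ⟨hab, haS⟩ := mem_erase.1 ha
    refine sub_abs_sub_mem_union haS hb ?_ fun h => hab (injOn_snd hHp hm₁ haS hb h)
    exact (hmin a haS).lt_of_ne fun h => hab (injOn_fst hHp hm₂ haS hb h.symm)
  have hinj : Set.InjOn (fun a : ℤ × ℤ => (a.1 - b.1, |a.2 - b.2|)) (S.erase b) := by
    intro a ha a' ha' h
    simp only [Prod.mk.injEq, sub_left_inj] at h
    exact injOn_fst hHp hm₂ (mem_of_mem_erase ha) (mem_of_mem_erase ha') h.1
  calc #S = #(S.erase b) + 1 := (card_erase_add_one hb).symm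
    _ ≤ _ := by grw [card_le_card_of_injOn _ hmaps hinj, card_union_le]

theorem card_eq_sum (hm₁ : m₁ ≠ 0) (c : ZMod p) :
    #(pairSolutions p H m₁ m₂ c) =
      ∑ h₂ ∈ Icc (1 : ℤ) H,
        #{h₁ ∈ Icc (1 : ℤ) H | ((h₁ : ℤ) : ZMod p) = (c + h₂ * m₂) * m₁⁻¹} := by
  rw [pairSolutions, card_filter_product_eq_sum]
  refine sum_congr rfl fun h₂ _ => congrArg card (filter_congr fun h₁ _ => ?_)
  rw [eq_mul_inv_iff_mul_eq₀ hm₁, sub_eq_iff_eq_add]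

theorem card_le (hm₁ : m₁ ≠ 0) (c : ZMod p) :
    #(pairSolutions p H m₁ m₂ c) ≤ H * (H / p + 1) := by
  rw [card_eq_sum hm₁]
  calc _ ≤ ∑ _h ∈ Icc (1 : ℤ) H, (H / p + 1) :=
        sum_le_sum fun _ _ => (card_filter_Icc_intCast_eq_bounds H _).2
    _ = H * (H / p + 1) := by simp

theorem le_card (hm₁ : m₁ ≠ 0) (c : ZMod p) :
    H * (H / p) ≤ #(pairSolutions p H m₁ m₂ c) := by
  rw [card_eq_sum hm₁]
  calc H * (H / p) = ∑ _h ∈ Icc (1 : ℤ) H, H / p := by simp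
    _ ≤ _ := sum_le_sum fun _ _ => (card_filter_Icc_intCast_eq_bounds H _).1

theorem card_le_card_zero_add_card_zero (hm₁ : m₁ ≠ 0) (hm₂ : m₂ ≠ 0) (c : ZMod p) :
    #(pairSolutions p H m₁ m₂ c) ≤
      #(pairSolutions p H m₁ m₂ 0) + #(pairSolutions p H m₁ (-m₂) 0) + 1 := by
  rcases le_total H p with hHp | hpH
  · exact card_le_card_zero_add_card_zero_of_le hHp hm₁ hm₂ c
  have hq : 1 ≤ H / p := (Nat.one_le_div_iff (Fact.out : p.Prime).pos).2 hpH
  calc #(pairSolutions p H m₁ m₂ c) ≤ H * (H / p + 1) := card_le hm₁ c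
    _ ≤ H * (H / p) + H * (H / p) := by nlinarith
    _ ≤ _ := by grw [← le_card hm₁ 0, ← le_card (m₂ := -m₂) hm₁ 0]; omega

end pairSolutions

theorem card_filter_eq_sum_card_pairSolutions {p : ℕ} (H : ℕ) (M : Finset (ZMod p)) (L : ℤ) :
    #{q ∈ (Icc (1 : ℤ) H ×ˢ Icc (1 : ℤ) H) ×ˢ (M ×ˢ M) |
        ((L + q.1.1 : ℤ) : ZMod p) * q.2.1 = ((L + q.1.2 : ℤ) : ZMod p) * q.2.2} =
      ∑ m ∈ M ×ˢ M, #(pairSolutions p H m.1 m.2 (L * (m.2 - m.1))) := by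
  rw [card_filter_product_eq_sum]
  refine sum_congr rfl fun m _ => congrArg card (filter_congr fun h _ => ?_)
  push_cast
  constructor <;> intro e <;> linear_combination e

theorem sum_card_pairSolutions_neg_le {p : ℕ} [NeZero p] (H : ℕ) (M : Finset (ZMod p)) :
    ∑ m ∈ M ×ˢ M, #(pairSolutions p H m.1 (-m.2) 0) ≤
      ∑ m ∈ M ×ˢ M, #(pairSolutions p H m.1 m.2 0) := by
  set A := Icc (1 : ℤ) H ×ˢ M
  let f : ℤ × ZMod p → ZMod p := fun x => x.1 * x.2
  calc ∑ m ∈ M ×ˢ M, #(pairSolutions p H m.1 (-m.2) 0)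
      = #{z ∈ A ×ˢ A | f z.1 = -f z.2} := by
        refine (sum_card_filter_product_product (Icc (1 : ℤ) H) M
          fun h₁ m₁ h₂ m₂ => ((h₁ : ℤ) : ZMod p) * m₁ - h₂ * -m₂ = 0).trans ?_
        exact congrArg card (filter_congr fun z _ => by
          rw [mul_neg, sub_neg_eq_add, add_eq_zero_iff_eq_neg])
    _ ≤ #{z ∈ A ×ˢ A | f z.1 = f z.2} := by
      have := two_mul_card_filter_eq_le A A f (fun x => -f x)
      simp only [neg_inj] at this
      omega
    _ = ∑ m ∈ M ×ˢ M, #(pairSolutions p H m.1 m.2 0) := by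
      refine ((sum_card_filter_product_product (Icc (1 : ℤ) H) M
        fun h₁ m₁ h₂ m₂ => ((h₁ : ℤ) : ZMod p) * m₁ - h₂ * m₂ = 0).trans ?_).symm
      exact congrArg card (filter_congr fun z _ => sub_eq_zero)

theorem stmt_7_general (p : ℕ) (hp : p.Prime) (H : ℕ)
    (M : Finset (ZMod p)) (hM : ∀ m ∈ M, m ≠ 0) (L : ℤ) :
    ((((Finset.Icc (1:ℤ) (H:ℤ)) ×ˢ (Finset.Icc (1:ℤ) (H:ℤ))) ×ˢ (M ×ˢ M)).filter
        (fun q => ((L + q.1.1 : ℤ) : ZMod p) * q.2.1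
                = ((L + q.1.2 : ℤ) : ZMod p) * q.2.2)).card ≤
      2 * ((((Finset.Icc (1:ℤ) (H:ℤ)) ×ˢ (Finset.Icc (1:ℤ) (H:ℤ))) ×ˢ (M ×ˢ M)).filter
        (fun q => ((q.1.1 : ℤ) : ZMod p) * q.2.1
                = ((q.1.2 : ℤ) : ZMod p) * q.2.2)).card + M.card ^ 2 := by
  have : Fact p.Prime := ⟨hp⟩
  have hJ₀ := card_filter_eq_sum_card_pairSolutions H M 0
  simp only [zero_add, Int.cast_zero, zero_mul] at hJ₀
  rw [card_filter_eq_sum_card_pairSolutions, hJ₀]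
  calc ∑ m ∈ M ×ˢ M, #(pairSolutions p H m.1 m.2 (L * (m.2 - m.1)))
      ≤ ∑ m ∈ M ×ˢ M,
          (#(pairSolutions p H m.1 m.2 0) + #(pairSolutions p H m.1 (-m.2) 0) + 1) :=
        sum_le_sum fun m hm => pairSolutions.card_le_card_zero_add_card_zero
          (hM _ (mem_product.1 hm).1) (hM _ (mem_product.1 hm).2) _
    _ = ∑ m ∈ M ×ˢ M, #(pairSolutions p H m.1 m.2 0) +
          ∑ m ∈ M ×ˢ M, #(pairSolutions p H m.1 (-m.2) 0) + #M ^ 2 := by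
        rw [sum_add_distrib, sum_add_distrib, sum_const, card_product, smul_eq_mul, mul_one, sq]
    _ ≤ 2 * ∑ m ∈ M ×ˢ M, #(pairSolutions p H m.1 m.2 0) + #M ^ 2 := by
        grw [sum_card_pairSolutions_neg_le]
        omega

/-- Lemma 2.4: J(L,𝓗,𝓜) ≤ 2·J(𝓗,𝓜) + M². -/
theorem stmt_7 (p : ℕ) (hp : p.Prime) (H : ℕ) (hH : 0 < H)
    (M : Finset (ZMod p)) (hM : ∀ m ∈ M, m ≠ 0) (L : ℤ) :
    ((((Finset.Icc (1:ℤ) (H:ℤ)) ×ˢ (Finset.Icc (1:ℤ) (H:ℤ))) ×ˢ (M ×ˢ M)).filter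
        (fun q => ((L + q.1.1 : ℤ) : ZMod p) * q.2.1
                = ((L + q.1.2 : ℤ) : ZMod p) * q.2.2)).card ≤
      2 * ((((Finset.Icc (1:ℤ) (H:ℤ)) ×ˢ (Finset.Icc (1:ℤ) (H:ℤ))) ×ˢ (M ×ˢ M)).filter
        (fun q => ((q.1.1 : ℤ) : ZMod p) * q.2.1
                = ((q.1.2 : ℤ) : ZMod p) * q.2.2)).card + M.card ^ 2 :=
  stmt_7_general p hp H M hM L
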